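/- Let α be a partial action of a topological group G on a Hausdorff topological space X, and let X̃ = (G × X)/∼ be the enveloping space, i.e. the quotient of G × X by the relation (r,x) ∼ (s,y) iff x ∈ X_{r⁻¹s} and α_{s⁻¹r}(x) = y, with the quotient topology. Let Gr(α) = {(t,x,y) ∈ G × X × X : x ∈ X_{t⁻¹} and α_t(x) = y} be the graph of α. Then X̃ is Hausdorff if and only if Gr(α) is a closed subset of G × X × X. -/

import Mathlib

/-- A partial action of a topological group `G` on a topological space `X`. -/
structure TopPartialAction (G : Type*) (X : Type*) [Group G] [TopologicalSpace G]
    [IsTopologicalGroup G] [TopologicalSpace X] where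
  dom : G → Set X
  act : G → X → X
  isOpen_dom : ∀ t, IsOpen (dom t)
  bijOn : ∀ t, Set.BijOn (act t) (dom t⁻¹) (dom t)
  isOpen_graph : IsOpen {p : G × X | p.2 ∈ dom p.1⁻¹}
  continuousOn : ContinuousOn (fun p : G × X => act p.1 p.2) {p : G × X | p.2 ∈ dom p.1⁻¹}
  dom_one : dom 1 = Set.univ
  act_one : ∀ x, act 1 x = x
  act_comp : ∀ s t x, x ∈ dom t⁻¹ → act t x ∈ dom s⁻¹ →
    x ∈ dom (s * t)⁻¹ ∧ act (s * t) x = act s (act t x)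

/-- The relation `(r, x) ∼ (s, y) ↔ x ∈ X_{r⁻¹ s} ∧ α_{s⁻¹ r}(x) = y` on `G × X`. -/
def TopPartialAction.rel {G X : Type*} [Group G] [TopologicalSpace G] [IsTopologicalGroup G]
    [TopologicalSpace X] (α : TopPartialAction G X) (p q : G × X) : Prop :=
  p.2 ∈ α.dom (p.1⁻¹ * q.1) ∧ α.act (q.1⁻¹ * p.1) p.2 = q.2

/-!
The quotient map `G × X → X̃` is open: the saturation of an open `U` is the projection to
`G × X` of the open set of pairs `(t, (s, y))` with `y ∈ X_{t⁻¹}` and `(s t⁻¹, α_t y) ∈ U`.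
For an open quotient map, Hausdorffness of the quotient is closedness of the relation in
`(G × X) × (G × X)`, and `(r, x) ∼ (s, y)` says exactly that `(s⁻¹ r, x, y) ∈ Gr(α)`. The map
`((r, x), (s, y)) ↦ (s⁻¹ r, x, y)` has the continuous section `(t, x, y) ↦ ((t, x), (1, y))`,
so it is a quotient map and the relation is closed iff the graph is.
-/

namespace TopPartialAction

variable {G X : Type*} [Group G] [TopologicalSpace G] [IsTopologicalGroup G]
  [TopologicalSpace X] (α : TopPartialAction G X)

def graph : Set (G × X × X) := {p | p.2.1 ∈ α.dom p.1⁻¹ ∧ α.act p.1 p.2.1 = p.2.2}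

lemma act_mem_dom {t : G} {x : X} (hx : x ∈ α.dom t⁻¹) : α.act t x ∈ α.dom t :=
  (α.bijOn t).mapsTo hx

lemma act_inv_act {t : G} {x : X} (hx : x ∈ α.dom t⁻¹) : α.act t⁻¹ (α.act t x) = x := by
  have h := α.act_comp t⁻¹ t x hx (by simpa using α.act_mem_dom hx)
  simpa [α.act_one] using h.2.symm

lemma rel_iff_exists {p q : G × X} :
    α.rel p q ↔ ∃ t, p.2 ∈ α.dom t⁻¹ ∧ (p.1 * t⁻¹, α.act t p.2) = q := by
  obtain ⟨r, x⟩ := p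
  obtain ⟨s, y⟩ := q
  constructor
  · rintro ⟨hx, hy⟩
    exact ⟨s⁻¹ * r, by simpa using hx, by simpa using hy⟩
  · rintro ⟨t, hx, h⟩
    obtain ⟨rfl, rfl⟩ := Prod.ext_iff.mp h
    exact ⟨by simpa using hx, by simp⟩

lemma rel_iff_mem_graph {p q : G × X} : α.rel p q ↔ (q.1⁻¹ * p.1, p.2, q.2) ∈ α.graph := by
  simp [rel, graph]

lemma rel_equivalence : Equivalence α.rel where
  refl p := α.rel_iff_exists.mpr ⟨1, by simp [α.dom_one], by simp [α.act_one]⟩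
  symm {p q} h := by
    obtain ⟨t, hx, rfl⟩ := α.rel_iff_exists.mp h
    exact α.rel_iff_exists.mpr
      ⟨t⁻¹, by simpa using α.act_mem_dom hx, by simp [α.act_inv_act hx]⟩
  trans {p q r} hpq hqr := by
    obtain ⟨t, hx, rfl⟩ := α.rel_iff_exists.mp hpq
    obtain ⟨u, hy, rfl⟩ := α.rel_iff_exists.mp hqr
    obtain ⟨hx', hact⟩ := α.act_comp u t p.2 hx hy
    exact α.rel_iff_exists.mpr ⟨u * t, hx', by simp [hact, mul_assoc]⟩

lemma mk_eq_mk_iff {p q : G × X} : Quot.mk α.rel p = Quot.mk α.rel q ↔ α.rel p q :=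
  Quot.eq.trans α.rel_equivalence.eqvGen_iff

lemma isOpenMap_quot_mk : IsOpenMap (Quot.mk α.rel) := by
  intro U hU
  let Γ : Set (G × G × X) := {q | q.2.2 ∈ α.dom q.1⁻¹}
  let F : G × G × X → G × X := fun q => (q.2.1 * q.1⁻¹, α.act q.1 q.2.2)
  have hΓ : IsOpen Γ :=
    α.isOpen_graph.preimage (continuous_fst.prodMk continuous_snd.snd)
  have hF : ContinuousOn F Γ :=
    (continuousOn_snd.fst.mul continuousOn_fst.inv).prodMk
      (α.continuousOn.comp (continuous_fst.prodMk continuous_snd.snd).continuousOn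
        fun _ hq => hq)
  have hsat : Quot.mk α.rel ⁻¹' (Quot.mk α.rel '' U) = Prod.snd '' (Γ ∩ F ⁻¹' U) := by
    ext p
    simp only [Set.mem_preimage, Set.mem_image, eq_comm (b := Quot.mk α.rel p), α.mk_eq_mk_iff,
      α.rel_iff_exists]
    constructor
    · rintro ⟨q, hq, t, hp, rfl⟩
      exact ⟨(t, p), ⟨hp, hq⟩, rfl⟩
    · rintro ⟨⟨t, p⟩, ⟨hp, hq⟩, rfl⟩
      exact ⟨F (t, p), hq, t, hp, rfl⟩
  rw [← isQuotientMap_quot_mk.isOpen_preimage, hsat]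
  exact isOpenMap_snd _ (hF.isOpen_inter_preimage hΓ hU)

lemma isOpenQuotientMap_quot_mk : IsOpenQuotientMap (Quot.mk α.rel) :=
  ⟨Quot.exists_rep, continuous_quot_mk, α.isOpenMap_quot_mk⟩

lemma isClosed_rel_iff_isClosed_graph :
    IsClosed {pq : (G × X) × (G × X) | α.rel pq.1 pq.2} ↔ IsClosed α.graph := by
  let φ : (G × X) × (G × X) → G × X × X := fun pq => (pq.2.1⁻¹ * pq.1.1, pq.1.2, pq.2.2)
  have hφ : Topology.IsQuotientMap φ :=
    .of_inverse (f := fun p : G × X × X => ((p.1, p.2.1), ((1 : G), p.2.2)))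
      (by fun_prop) (by fun_prop) fun p => by simp [φ]
  have hrel : {pq : (G × X) × (G × X) | α.rel pq.1 pq.2} = φ ⁻¹' α.graph :=
    Set.ext fun _ => α.rel_iff_mem_graph
  rw [hrel, hφ.isClosed_preimage]

end TopPartialAction

theorem TopPartialAction.t2_iff_closed_graph_general {G X : Type*} [Group G] [TopologicalSpace G]
    [IsTopologicalGroup G] [TopologicalSpace X] (α : TopPartialAction G X) :
    T2Space (Quot α.rel) ↔
      IsClosed {p : G × X × X | p.2.1 ∈ α.dom p.1⁻¹ ∧ α.act p.1 p.2.1 = p.2.2} := by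
  rw [t2Space_iff_of_isOpenQuotientMap α.isOpenQuotientMap_quot_mk]
  simp only [α.mk_eq_mk_iff]
  exact α.isClosed_rel_iff_isClosed_graph

/-- If `X` is Hausdorff, the enveloping space `X̃ = (G × X)/∼` is Hausdorff if and only
if the graph `Gr(α) = {(t, x, y) : x ∈ X_{t⁻¹}, α_t x = y}` is closed in `G × X × X`. -/
theorem TopPartialAction.t2_iff_closed_graph {G X : Type*} [Group G] [TopologicalSpace G]
    [IsTopologicalGroup G] [TopologicalSpace X] [T2Space X] (α : TopPartialAction G X) :
    T2Space (Quot α.rel) ↔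
      IsClosed {p : G × X × X | p.2.1 ∈ α.dom p.1⁻¹ ∧ α.act p.1 p.2.1 = p.2.2} :=
  TopPartialAction.t2_iff_closed_graph_general α
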